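/- Let ϑ and ϑ' be irrational real numbers. The following are equivalent: (i) there exist an additive group isomorphism f : G_ϑ → G_{ϑ'} and a real λ ≥ 1 such that for every x ∈ G_ϑ with x ≥ 0 one has 0 ≤ f(x) ≤ λ·x, and for every y ∈ G_{ϑ'} with y ≥ 0 one has 0 ≤ f⁻¹(y) ≤ λ·y (i.e., the weighted groups G_ϑ and G_{ϑ'}, with weight w(x) = x for x ≥ 0 and w(x) = ∞ for x < 0, are Lipschitz isomorphic); (ii) there exist integers a, b, c, d with a·d − b·c = ±1 and ϑ' = (a·ϑ + b)/(c·ϑ + d). -/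

import Mathlib

/-- `G_θ = ℤ + θℤ`, as an additive subgroup of `ℝ`. -/
def Gsub (θ : ℝ) : AddSubgroup ℝ where
  carrier := {x | ∃ m n : ℤ, x = m + n * θ}
  zero_mem' := ⟨0, 0, by simp⟩
  add_mem' := by
    rintro x y ⟨m1, n1, rfl⟩ ⟨m2, n2, rfl⟩
    exact ⟨m1 + m2, n1 + n2, by push_cast; ring⟩
  neg_mem' := by
    rintro x ⟨m, n, rfl⟩
    exact ⟨-m, -n, by push_cast; ring⟩

lemma coeffs_unique {θ : ℝ} (hθ : Irrational θ) {m n m' n' : ℤ}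
    (h : (m : ℝ) + n * θ = m' + n' * θ) : m = m' ∧ n = n' := by
  have hn : n = n' := by
    by_contra hne
    have hne' : ((n' - n : ℤ) : ℝ) ≠ 0 := by
      exact_mod_cast sub_ne_zero.mpr (Ne.symm hne)
    apply hθ
    refine ⟨((m - m' : ℤ) : ℚ) / ((n' - n : ℤ) : ℚ), ?_⟩
    push_cast
    rw [div_eq_iff (by exact_mod_cast hne')]
    push_cast at h ⊢
    linarith
  subst hn
  refine ⟨?_, rfl⟩
  have : (m : ℝ) = m' := by linarith
  exact_mod_cast this

lemma lipschitz_of_pos {θ θ' : ℝ} (a b c d : ℤ)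
    (hdet : a * d - b * c = 1 ∨ a * d - b * c = -1)
    (ht : 0 < (c : ℝ) * θ + d)
    (heq : θ' = ((a : ℝ) * θ + b) / ((c : ℝ) * θ + d)) :
    ∃ (f : Gsub θ ≃+ Gsub θ') (lam : ℝ), 1 ≤ lam ∧
      (∀ x : Gsub θ, 0 ≤ (x : ℝ) → 0 ≤ (f x : ℝ) ∧ (f x : ℝ) ≤ lam * (x : ℝ)) ∧
      (∀ y : Gsub θ', 0 ≤ (y : ℝ) → 0 ≤ (f.symm y : ℝ) ∧ (f.symm y : ℝ) ≤ lam * (y : ℝ)) := by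
  have ht0 : (c : ℝ) * θ + d ≠ 0 := ne_of_gt ht
  have hdet2 : ((a * d - b * c : ℤ) : ℝ) * ((a * d - b * c : ℤ) : ℝ) = 1 := by
    rcases hdet with h | h <;> rw [h] <;> norm_num
  have hto : ∀ x : ℝ, x ∈ Gsub θ → x / ((c : ℝ) * θ + d) ∈ Gsub θ' := by
    rintro x ⟨m, n, rfl⟩
    refine ⟨(a * d - b * c) * (a * m - b * n), (a * d - b * c) * (d * n - c * m), ?_⟩
    rw [heq]
    field_simp [show θ * (c : ℝ) + d ≠ 0 by rwa [mul_comm θ]]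
    push_cast
    push_cast at hdet2
    linear_combination (-((m : ℝ) + n * θ)) * hdet2
  have hfrom : ∀ y : ℝ, y ∈ Gsub θ' → ((c : ℝ) * θ + d) * y ∈ Gsub θ := by
    rintro y ⟨M, N, rfl⟩
    refine ⟨M * d + N * b, M * c + N * a, ?_⟩
    rw [heq]
    field_simp
    push_cast
    ring
  let F : Gsub θ ≃+ Gsub θ' :=
    { toFun := fun x => ⟨(x : ℝ) / ((c : ℝ) * θ + d), hto _ x.2⟩
      invFun := fun y => ⟨((c : ℝ) * θ + d) * (y : ℝ), hfrom _ y.2⟩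
      left_inv := fun x => Subtype.ext (by field_simp)
      right_inv := fun y => Subtype.ext (by field_simp)
      map_add' := fun x y => Subtype.ext (by push_cast; ring) }
  have hFval : ∀ x : Gsub θ, (F x : ℝ) = (x : ℝ) / ((c : ℝ) * θ + d) := fun x => rfl
  have hFsymm : ∀ y : Gsub θ', (F.symm y : ℝ) = ((c : ℝ) * θ + d) * (y : ℝ) := fun y => rfl
  set t : ℝ := (c : ℝ) * θ + d
  refine ⟨F, max t t⁻¹, ?_, ?_, ?_⟩
  · rcases le_total 1 t with h | h
    · exact le_max_of_le_left h
    · refine le_max_of_le_right ?_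
      rw [le_inv_comm₀ one_pos ht]
      simpa using h
  · intro x hx
    rw [hFval]
    constructor
    · exact div_nonneg hx ht.le
    · rw [div_eq_inv_mul]
      exact mul_le_mul_of_nonneg_right (le_max_right _ _) hx
  · intro y hy
    rw [hFsymm]
    constructor
    · exact mul_nonneg ht.le hy
    · exact mul_le_mul_of_nonneg_right (le_max_left _ _) hy

/-- For irrationals `θ`, `θ'`, the weighted groups `G_θ` and `G_{θ'}` (with weight
`w(x) = x` for `x ≥ 0` and `w(x) = ∞` for `x < 0`) are Lipschitz isomorphic — i.e. there
is a group isomorphism `f` and `λ ≥ 1` with `0 ≤ f(x) ≤ λ·x` for `x ≥ 0` in `G_θ` and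
`0 ≤ f⁻¹(y) ≤ λ·y` for `y ≥ 0` in `G_{θ'}` — if and only if `θ' = (a·θ + b)/(c·θ + d)`
for some integers with `a·d − b·c = ±1`. -/
theorem G_theta_lipschitz_classification (θ θ' : ℝ)
    (hθ : Irrational θ) (hθ' : Irrational θ') :
    (∃ (f : Gsub θ ≃+ Gsub θ') (lam : ℝ), 1 ≤ lam ∧
      (∀ x : Gsub θ, 0 ≤ (x : ℝ) → 0 ≤ (f x : ℝ) ∧ (f x : ℝ) ≤ lam * (x : ℝ)) ∧
      (∀ y : Gsub θ', 0 ≤ (y : ℝ) → 0 ≤ (f.symm y : ℝ) ∧ (f.symm y : ℝ) ≤ lam * (y : ℝ))) ↔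
    (∃ a b c d : ℤ, (a * d - b * c = 1 ∨ a * d - b * c = -1) ∧
      θ' = (a * θ + b) / (c * θ + d)) := by
  constructor
  · rintro ⟨f, lam, hlam, hf, hg⟩
    -- the element 1 of Gsub θ
    have h1mem : (1 : ℝ) ∈ Gsub θ := ⟨1, 0, by norm_num⟩
    set e : Gsub θ := ⟨1, h1mem⟩ with he
    set s : ℝ := (f e : ℝ) with hs
    have hmono : ∀ x : Gsub θ, 0 ≤ (x : ℝ) → 0 ≤ (f x : ℝ) := fun x hx => (hf x hx).1
    have hspos : 0 < s := by
      rcases (hmono e (by norm_num)).lt_or_eq with h | h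
      · exact h
      · exfalso
        have hfe0 : f e = 0 := by
          exact_mod_cast Subtype.ext h.symm
        have he0 : e = 0 := by
          apply f.injective
          simp [hfe0]
        have : ((e : ℝ)) = 0 := by rw [he0]; rfl
        norm_num [he] at this
    have hlinpos : ∀ x : Gsub θ, 0 < (x : ℝ) → (f x : ℝ) = s * (x : ℝ) := by
      intro x hx
      by_contra hne
      rcases lt_or_gt_of_ne hne with hlt | hgt
      · -- f x < s x, choose rational between f x / s and x
        obtain ⟨q, hq1, hq2⟩ := exists_rat_btwn
          (show (f x : ℝ) / s < (x : ℝ) from (div_lt_iff₀ hspos).mpr (by linarith))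
        set z : Gsub θ := (q.den : ℤ) • x - q.num • e with hz
        have hzc : (z : ℝ) = (q.den : ℝ) * (x : ℝ) - (q.num : ℝ) := by
          rw [hz]
          push_cast
          norm_num [he]
        have hden : (0 : ℝ) < (q.den : ℝ) := by exact_mod_cast q.pos
        have hzpos : 0 ≤ (z : ℝ) := by
          rw [hzc]
          have : (q : ℝ) < x := hq2
          rw [Rat.cast_def] at this
          rw [div_lt_iff₀ hden] at this
          linarith
        have hfz := hmono z hzpos
        have hfzc : (f z : ℝ) = (q.den : ℝ) * (f x : ℝ) - (q.num : ℝ) * s := by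
          rw [hz, map_sub, map_zsmul, map_zsmul, hs]
          push_cast [zsmul_eq_mul]
          ring
        rw [hfzc] at hfz
        have hq1' : (f x : ℝ) / s < (q.num : ℝ) / (q.den : ℝ) := by
          rwa [Rat.cast_def] at hq1
        rw [div_lt_div_iff₀ hspos hden] at hq1'
        linarith
      · obtain ⟨q, hq1, hq2⟩ := exists_rat_btwn
          (show (x : ℝ) < (f x : ℝ) / s from (lt_div_iff₀ hspos).mpr (by linarith))
        set z : Gsub θ := q.num • e - (q.den : ℤ) • x with hz
        have hzc : (z : ℝ) = (q.num : ℝ) - (q.den : ℝ) * (x : ℝ) := by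
          rw [hz]
          push_cast
          norm_num [he]
        have hden : (0 : ℝ) < (q.den : ℝ) := by exact_mod_cast q.pos
        have hzpos : 0 ≤ (z : ℝ) := by
          rw [hzc]
          have : (x : ℝ) < (q : ℝ) := hq1
          rw [Rat.cast_def] at this
          rw [lt_div_iff₀ hden] at this
          linarith
        have hfz := hmono z hzpos
        have hfzc : (f z : ℝ) = (q.num : ℝ) * s - (q.den : ℝ) * (f x : ℝ) := by
          rw [hz, map_sub, map_zsmul, map_zsmul, hs]
          push_cast [zsmul_eq_mul]
          ring
        rw [hfzc] at hfz
        have hq2' : (q.num : ℝ) / (q.den : ℝ) < (f x : ℝ) / s := by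
          rwa [Rat.cast_def] at hq2
        rw [div_lt_div_iff₀ hden hspos] at hq2'
        linarith
    have hlin : ∀ x : Gsub θ, (f x : ℝ) = s * (x : ℝ) := by
      intro x
      rcases lt_trichotomy (0 : ℝ) (x : ℝ) with h | h | h
      · exact hlinpos x h
      · have hx0 : x = 0 := by exact_mod_cast Subtype.ext h.symm
        rw [hx0, map_zero]
        simp
      · have := hlinpos (-x) (by push_cast; linarith)
        push_cast at this
        rw [map_neg] at this
        push_cast at this
        linarith
    -- representations
    have h1'mem : (1 : ℝ) ∈ Gsub θ' := ⟨1, 0, by norm_num⟩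
    have hθ'mem : θ' ∈ Gsub θ' := ⟨0, 1, by norm_num⟩
    obtain ⟨m, n, h1⟩ : ∃ m n : ℤ, (1 : ℝ) = s * ((m : ℝ) + n * θ) := by
      set y1 : Gsub θ' := ⟨1, h1'mem⟩
      obtain ⟨m, n, hmn⟩ := (f.symm y1).2
      refine ⟨m, n, ?_⟩
      have := hlin (f.symm y1)
      rw [f.apply_symm_apply] at this
      rw [← hmn, ← this]
    obtain ⟨p, qq, h2⟩ : ∃ p qq : ℤ, θ' = s * ((p : ℝ) + qq * θ) := by
      set y2 : Gsub θ' := ⟨θ', hθ'mem⟩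
      obtain ⟨p, qq, hpq⟩ := (f.symm y2).2
      refine ⟨p, qq, ?_⟩
      have := hlin (f.symm y2)
      rw [f.apply_symm_apply] at this
      rw [← hpq, ← this]
    obtain ⟨a', b', h3⟩ : ∃ a' b' : ℤ, s = (a' : ℝ) + b' * θ' := (f e).2
    obtain ⟨c', d', h4⟩ : ∃ c' d' : ℤ, s * θ = (c' : ℝ) + d' * θ' := by
      have hθmem : θ ∈ Gsub θ := ⟨0, 1, by norm_num⟩
      set eθ : Gsub θ := ⟨θ, hθmem⟩
      obtain ⟨c', d', h⟩ := (f eθ).2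
      refine ⟨c', d', ?_⟩
      rw [← h, hlin eθ]
    have key1 : ((1 : ℤ) : ℝ) + ((0 : ℤ) : ℝ) * θ' =
        ((m * a' + n * c' : ℤ) : ℝ) + ((m * b' + n * d' : ℤ) : ℝ) * θ' := by
      push_cast
      linear_combination h1 + (m : ℝ) * h3 + (n : ℝ) * h4
    have key2 : ((0 : ℤ) : ℝ) + ((1 : ℤ) : ℝ) * θ' =
        ((p * a' + qq * c' : ℤ) : ℝ) + ((p * b' + qq * d' : ℤ) : ℝ) * θ' := by
      push_cast
      linear_combination h2 + (p : ℝ) * h3 + (qq : ℝ) * h4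
    obtain ⟨e1, e2⟩ := coeffs_unique hθ' key1
    obtain ⟨e3, e4⟩ := coeffs_unique hθ' key2
    have hdetmul : (m * qq - n * p) * (a' * d' - b' * c') = 1 := by
      calc (m * qq - n * p) * (a' * d' - b' * c')
          = (m * a' + n * c') * (p * b' + qq * d')
            - (m * b' + n * d') * (p * a' + qq * c') := by ring
        _ = 1 * 1 - 0 * 0 := by rw [← e1, ← e2, ← e3, ← e4]
        _ = 1 := by ring
    have hu : m * qq - n * p = 1 ∨ m * qq - n * p = -1 :=
      Int.isUnit_iff.mp (IsUnit.of_mul_eq_one _ hdetmul)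
    have hmn0 : (m : ℝ) + n * θ ≠ 0 := by
      intro h0
      rw [h0, mul_zero] at h1
      norm_num at h1
    refine ⟨qq, p, n, m, ?_, ?_⟩
    · have hh : qq * m - p * n = m * qq - n * p := by ring
      rw [hh]
      exact hu
    · have hmn0' : (n : ℝ) * θ + m ≠ 0 := by
        intro h0; apply hmn0; linarith
      rw [h2, eq_div_iff hmn0']
      linear_combination (-((p : ℝ) + qq * θ)) * h1
  · rintro ⟨a, b, c, d, hdet, heq⟩
    have hne : (c : ℝ) * θ + d ≠ 0 := by
      intro h0
      rcases eq_or_ne c 0 with rfl | hc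
      · have hd : (d : ℝ) = 0 := by simpa using h0
        have : d = 0 := by exact_mod_cast hd
        subst this
        rcases hdet with h | h <;> omega
      · apply hθ
        refine ⟨(-(d : ℚ)) / (c : ℚ), ?_⟩
        have hc' : (c : ℝ) ≠ 0 := by exact_mod_cast hc
        push_cast
        rw [div_eq_iff hc']
        linarith
    rcases hne.lt_or_gt with hneg | hpos
    · have hdet' : (-a) * (-d) - (-b) * (-c) = 1 ∨ (-a) * (-d) - (-b) * (-c) = -1 := by
        have hh : (-a) * (-d) - (-b) * (-c) = a * d - b * c := by ring
        rw [hh]; exact hdet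
      have hpos' : 0 < ((-c : ℤ) : ℝ) * θ + ((-d : ℤ) : ℝ) := by push_cast; linarith
      have heq' : θ' = (((-a : ℤ) : ℝ) * θ + ((-b : ℤ) : ℝ)) / (((-c : ℤ) : ℝ) * θ + ((-d : ℤ) : ℝ)) := by
        push_cast
        rw [heq, ← neg_div_neg_eq]
        ring_nf
      exact lipschitz_of_pos (-a) (-b) (-c) (-d) hdet' hpos' heq'
    · exact lipschitz_of_pos a b c d hdet hpos heq
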